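/- arXiv:1901.02408 — 8 statements merged into one kernel-verified Lean document; each statement's English description precedes it below -/
import Mathlib

section
/- The function f_3(z) = z + z^3/4 satisfies |(z/f_3(z))^2 · f_3'(z) - 1| < 1 for all z in the open unit disc; i.e., f_3 belongs to the class U. -/
/-! Since `f₃(z) = z (4 + z²) / 4` and `f₃'(z) = (4 + 3z²) / 4`, the expression equals
`w (4 - w) / (4 + w)²` with `w = z²`. For `|w| < 1` the numerator has modulus below `5` and the
denominator modulus above `9`. -/

open Metric

lemma deriv_add_pow_three_div_four (z : ℂ) :
    deriv (fun w : ℂ => w + w ^ 3 / 4) z = 1 + 3 * z ^ 2 / 4 := by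
  have h : HasDerivAt (fun w : ℂ => w + w ^ 3 / 4) (1 + 3 * z ^ 2 / 4) z := by
    refine ((hasDerivAt_id' z).fun_add ((hasDerivAt_pow 3 z).div_const 4)).congr_deriv ?_
    norm_num
  exact h.deriv

lemma three_lt_norm_four_add {w : ℂ} (hw : ‖w‖ < 1) : 3 < ‖4 + w‖ := by
  have h : (4 : ℝ) ≤ ‖4 + w‖ + ‖w‖ := by
    calc (4 : ℝ) = ‖(4 + w) - w‖ := by norm_num
      _ ≤ ‖4 + w‖ + ‖w‖ := norm_sub_le _ _
  linarith

lemma norm_mul_four_sub_lt_five {w : ℂ} (hw : ‖w‖ < 1) : ‖w * (4 - w)‖ < 5 := by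
  have h4 : ‖4 - w‖ ≤ 5 := by
    calc ‖4 - w‖ ≤ ‖(4 : ℂ)‖ + ‖w‖ := norm_sub_le _ _
      _ ≤ 5 := by norm_num; linarith
  rw [norm_mul]
  nlinarith [norm_nonneg w]

lemma norm_mul_four_sub_div_four_add_sq_lt_one {w : ℂ} (hw : ‖w‖ < 1) :
    ‖w * (4 - w) / (4 + w) ^ 2‖ < 1 := by
  have hden := three_lt_norm_four_add hw
  rw [norm_div, norm_pow, div_lt_one (by positivity)]
  nlinarith [norm_mul_four_sub_lt_five hw]

lemma sq_div_mul_deriv_sub_one_eq {z : ℂ} (hz : z ≠ 0) (h4 : 4 + z ^ 2 ≠ 0) :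
    (z / (z + z ^ 3 / 4)) ^ 2 * (1 + 3 * z ^ 2 / 4) - 1
      = z ^ 2 * (4 - z ^ 2) / (4 + z ^ 2) ^ 2 := by
  have hf : z + z ^ 3 / 4 = z * (4 + z ^ 2) / 4 := by ring
  rw [hf]
  field_simp
  ring

theorem stmt_1 :
    ∀ z ∈ ball (0 : ℂ) 1, z ≠ 0 →
      ‖(z / (z + z ^ 3 / 4)) ^ 2 * deriv (fun w : ℂ => w + w ^ 3 / 4) z - 1‖ < 1 := by
  intro z hz hz0
  have hz2 : ‖z ^ 2‖ < 1 := by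
    rw [mem_ball_zero_iff] at hz
    rw [norm_pow]
    exact pow_lt_one₀ (norm_nonneg z) hz two_ne_zero
  rw [deriv_add_pow_three_div_four,
    sq_div_mul_deriv_sub_one_eq hz0
      (norm_pos_iff.mp ((three_lt_norm_four_add hz2).trans' three_pos))]
  exact norm_mul_four_sub_div_four_add_sq_lt_one hz2
end

section
/- For each integer n ≥ 2, the function f_n(z) = z + z^n/(2(n-1)) satisfies Re(1 + z f_n''(z)/f_n'(z)) > 0 for all |z| < r_0 where r_0 = (2(n-1)/n^2)^{1/(n-1)}; i.e., f_n is convex in the disc of radius r_0. -/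
open Metric

/-!
With `a = n z^(n-1) / (2(n-1))` one has `f' = 1 + a` and `z f'' = (n-1) a`, so
`1 + z f''/f' = (1 + n a)/(1 + a)`. The radius `r₀` is exactly the one for which `|z| < r₀`
means `n |a| < 1`, and then `Re ((1 + n a)(1 + ā)) ≥ (1 - |a|)(1 - n |a|) > 0`.
-/

theorem Complex.re_one_add_sub_one_mul_div_one_add_pos {a : ℂ} {c : ℝ} (hc : 1 ≤ c)
    (hca : c * ‖a‖ < 1) : 0 < (1 + (c - 1) * a / (1 + a)).re := by
  have ha : ‖a‖ < 1 := by nlinarith [norm_nonneg a]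
  have h1a : 1 + a ≠ 0 := fun h => by
    simp [show a = -1 by linear_combination h] at ha
  have hre : -‖a‖ ≤ a.re := neg_le_of_abs_le (abs_re_le_norm a)
  have hsq : a.re ^ 2 + a.im ^ 2 = ‖a‖ ^ 2 := by
    rw [← normSq_eq_norm_sq, normSq_apply]; ring
  have hre_eq : (1 + (c - 1) * a / (1 + a)).re
      = ((1 + c * a.re) * (1 + a.re) + c * a.im * a.im) / normSq (1 + a) := by
    rw [show 1 + (c - 1) * a / (1 + a) = (1 + c * a) / (1 + a) by field_simp; ring, div_re]
    simp [normSq]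
    ring
  rw [hre_eq]
  refine div_pos ?_ (normSq_pos.mpr h1a)
  -- the numerator is `1 + (c + 1) Re a + c |a|² ≥ (1 - |a|) (1 - c |a|)`
  nlinarith [mul_pos (sub_pos.mpr ha) (sub_pos.mpr hca), norm_nonneg a]

theorem deriv_add_pow_div (n : ℕ) (d : ℂ) :
    deriv (fun w : ℂ => w + w ^ n / d) = fun w => 1 + n * w ^ (n - 1) / d := by
  funext w
  exact ((hasDerivAt_id w).add ((hasDerivAt_pow n w).div_const d)).deriv

theorem mul_deriv_deriv_add_pow_div (n : ℕ) (d z : ℂ) :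
    z * deriv (deriv (fun w : ℂ => w + w ^ n / d)) z = ((n : ℂ) - 1) * (n * z ^ (n - 1) / d) := by
  rw [deriv_add_pow_div,
    ((((hasDerivAt_pow (n - 1) z).const_mul (n : ℂ)).div_const d).const_add 1).deriv]
  rcases n with _ | _ | m
  · simp
  · simp
  · simp only [Nat.add_sub_cancel, Nat.cast_add, Nat.cast_one, pow_succ' z m]
    ring

theorem Real.pow_lt_of_lt_rpow_one_div {x b : ℝ} {k : ℕ} (hk : k ≠ 0) (hx : 0 ≤ x) (hb : 0 ≤ b)
    (h : x < b ^ ((1 : ℝ) / k)) : x ^ k < b := by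
  rwa [one_div, lt_rpow_inv_iff_of_pos hx hb (by positivity), rpow_natCast] at h

theorem stmt_3 (n : ℕ) (hn : 2 ≤ n) :
    ∀ z : ℂ, ‖z‖ < (2 * ((n : ℝ) - 1) / n ^ 2) ^ ((1 : ℝ) / ((n : ℝ) - 1)) →
      0 < (1 + z * deriv (deriv (fun w : ℂ => w + w ^ n / (2 * ((n : ℂ) - 1)))) z /
            deriv (fun w : ℂ => w + w ^ n / (2 * ((n : ℂ) - 1))) z).re := by
  intro z hz
  have hnR : (2 : ℝ) ≤ n := by exact_mod_cast hn
  have hzpow : ‖z‖ ^ (n - 1) < 2 * ((n : ℝ) - 1) / n ^ 2 := by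
    refine Real.pow_lt_of_lt_rpow_one_div (by omega) (norm_nonneg z)
      (div_nonneg (by linarith) (by positivity)) ?_
    rwa [Nat.cast_sub (by omega), Nat.cast_one]
  set a : ℂ := n * z ^ (n - 1) / (2 * ((n : ℂ) - 1))
  have hnorm_a : ‖a‖ = n * ‖z‖ ^ (n - 1) / (2 * ((n : ℝ) - 1)) := by
    rw [norm_div, norm_mul, norm_pow, Complex.norm_natCast,
      show 2 * ((n : ℂ) - 1) = ((2 * ((n : ℝ) - 1) : ℝ) : ℂ) by push_cast; ring,
      Complex.norm_of_nonneg (by linarith)]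
  have hna : (n : ℝ) * ‖a‖ < 1 := by
    rw [hnorm_a, mul_div_assoc', div_lt_one (by linarith)]
    rw [lt_div_iff₀ (by positivity)] at hzpow
    nlinarith
  have key := Complex.re_one_add_sub_one_mul_div_one_add_pos (by linarith) hna
  rw [Complex.ofReal_natCast] at key
  rwa [mul_deriv_deriv_add_pow_div, deriv_add_pow_div]
end

section
/- Every function f in the class Ω is starlike: if f is analytic on the unit disc with f(0) = 0, f'(0) = 1, and |z f'(z) - f(z)| < 1/2 for all z in the unit disc, then Re(z f'(z)/f(z)) > 0 for all z in the unit disc with z ≠ 0 (and f(z) ≠ 0 for z ≠ 0). -/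
/-!
The function `φ z = z f'(z) - f(z)` satisfies `φ 0 = φ' 0 = 0` and `‖φ‖ < 1/2`, so the Schwarz lemma
at order two gives `‖φ z‖ ≤ ‖z‖²/2`. As `(f z / z)' = φ z / z²`, the mean value inequality gives
`‖f z / z - 1‖ ≤ ‖z‖/2`, hence `‖f z‖ ≥ ‖z‖ - ‖z‖²/2 > ‖z‖²/2 ≥ ‖φ z‖` on the punctured disc.
Thus `z f'(z) / f(z) = 1 + φ z / f z` lies in the disc of radius one around `1`.
-/

open Metric Set
open scoped Topology

theorem hasDerivAt_mul_deriv_sub {𝕜 : Type*} [NontriviallyNormedField 𝕜] {f : 𝕜 → 𝕜} {x : 𝕜}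
    (hf : DifferentiableAt 𝕜 f x) (hf' : DifferentiableAt 𝕜 (deriv f) x) :
    HasDerivAt (fun w => w * deriv f w - f w) (x * deriv (deriv f) x) x := by
  refine (((hasDerivAt_id' x).fun_mul hf'.hasDerivAt).fun_sub hf.hasDerivAt).congr_deriv ?_
  ring

theorem ContinuousAt.norm_le_of_eventually_nhdsNE {X E : Type*} [TopologicalSpace X]
    [SeminormedAddCommGroup E] {F : X → E} {x : X} {C : ℝ} [(𝓝[≠] x).NeBot]
    (hF : ContinuousAt F x) (h : ∀ᶠ y in 𝓝[≠] x, ‖F y‖ ≤ C) : ‖F x‖ ≤ C :=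
  le_of_tendsto (hF.tendsto.mono_left nhdsWithin_le_nhds).norm h

theorem Complex.norm_le_mul_sq_of_mapsTo_ball {φ : ℂ → ℂ} {R C : ℝ}
    (hd : DifferentiableOn ℂ φ (ball 0 R)) (h_maps : MapsTo φ (ball 0 R) (closedBall 0 C))
    (h₀ : φ 0 = 0) (h₁ : HasDerivAt φ 0 0) {z : ℂ} (hz : z ∈ ball 0 R) :
    ‖φ z‖ ≤ C * (‖z‖ / R) ^ 2 := by
  have ho : (φ · - φ 0) =o[𝓝 0] (fun w => ‖w - 0‖ ^ 1) := by
    simpa using (hasDerivAt_iff_isLittleO.mp h₁).norm_right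
  have h_maps' : MapsTo φ (ball 0 R) (closedBall (φ 0) C) := by rwa [h₀]
  simpa [h₀] using dist_le_mul_div_pow_of_mapsTo_ball_of_isLittleO hd h_maps' ho hz

theorem norm_dslope_sub_deriv_le {f : ℂ → ℂ} {R C : ℝ} (hf : AnalyticOnNhd ℂ f (ball 0 R))
    (hf0 : f 0 = 0) (hC : ∀ w ∈ ball (0 : ℂ) R, ‖w * deriv f w - f w‖ ≤ C * ‖w‖ ^ 2)
    {z : ℂ} (hz : z ∈ ball 0 R) : ‖dslope f 0 z - deriv f 0‖ ≤ C * ‖z‖ := by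
  set g := dslope f 0
  have h0 : (0 : ℂ) ∈ ball 0 R := mem_ball_self (pos_of_mem_ball hz)
  have hg : AnalyticOnNhd ℂ g (ball 0 R) :=
    ((Complex.differentiableOn_dslope (isOpen_ball.mem_nhds h0)).mpr
      hf.differentiableOn).analyticOnNhd isOpen_ball
  have hderiv_ne : ∀ w ∈ ball (0 : ℂ) R, w ≠ 0 → ‖deriv g w‖ ≤ C := by
    intro w hw hw0
    have hgw : g =ᶠ[𝓝 w] fun z => f z / z := by
      filter_upwards [eventually_ne_nhds hw0] with z hz
      simp [g, dslope_of_ne _ hz, slope_def_field, hf0]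
    have := ((hf w hw).differentiableAt.hasDerivAt.fun_div (hasDerivAt_id' w) hw0).deriv
    rw [hgw.deriv_eq, this, norm_div, norm_pow, div_le_iff₀ (pow_pos (norm_pos_iff.mpr hw0) 2)]
    simpa [mul_comm] using hC w hw
  have hderiv : ∀ w ∈ ball (0 : ℂ) R, ‖deriv g w‖ ≤ C := by
    intro w hw
    rcases eq_or_ne w 0 with rfl | hw0
    · refine (hg.deriv 0 hw).continuousAt.norm_le_of_eventually_nhdsNE ?_
      filter_upwards [nhdsWithin_le_nhds (isOpen_ball.mem_nhds hw), self_mem_nhdsWithin]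
        with z hz hz0 using hderiv_ne z hz hz0
    · exact hderiv_ne w hw hw0
  simpa [g] using (convex_ball (0 : ℂ) R).norm_image_sub_le_of_norm_deriv_le
    (fun w hw => (hg w hw).differentiableAt) hderiv h0 hz

theorem Complex.re_div_pos_of_norm_sub_lt {a b : ℂ} (h : ‖a - b‖ < ‖b‖) : 0 < (a / b).re := by
  have hb : b ≠ 0 := norm_pos_iff.mp ((norm_nonneg _).trans_lt h)
  have hlt : ‖(a - b) / b‖ < 1 := by rwa [norm_div, div_lt_one (norm_pos_iff.mpr hb)]
  have : a / b = 1 + (a - b) / b := by field_simp; ring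
  rw [this, Complex.add_re, Complex.one_re]
  linarith [(abs_le.mp (Complex.abs_re_le_norm ((a - b) / b))).1]

theorem stmt_4 (f : ℂ → ℂ) (hf : AnalyticOnNhd ℂ f (ball 0 1))
    (hf0 : f 0 = 0) (hf1 : deriv f 0 = 1)
    (hΩ : ∀ z ∈ ball (0 : ℂ) 1, ‖z * deriv f z - f z‖ < 1 / 2) :
    ∀ z ∈ ball (0 : ℂ) 1, z ≠ 0 → f z ≠ 0 ∧ 0 < (z * deriv f z / f z).re := by
  have h01 : (0 : ℂ) ∈ ball (0 : ℂ) 1 := mem_ball_self one_pos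
  have hφ : ∀ z ∈ ball (0 : ℂ) 1, ‖z * deriv f z - f z‖ ≤ 1 / 2 * ‖z‖ ^ 2 := by
    have hd : DifferentiableOn ℂ (fun w => w * deriv f w - f w) (ball 0 1) :=
      (differentiableOn_id.mul hf.deriv.differentiableOn).sub hf.differentiableOn
    have h₁ : HasDerivAt (fun w => w * deriv f w - f w) 0 0 := by
      simpa using hasDerivAt_mul_deriv_sub (hf 0 h01).differentiableAt
        (hf.deriv 0 h01).differentiableAt
    intro z hz
    simpa using Complex.norm_le_mul_sq_of_mapsTo_ball hd
      (fun w hw => mem_closedBall_zero_iff.mpr (hΩ w hw).le) (by simp [hf0]) h₁ hz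
  intro z hz hz0
  have hg : ‖dslope f 0 z - 1‖ ≤ 1 / 2 * ‖z‖ := hf1 ▸ norm_dslope_sub_deriv_le hf hf0 hφ hz
  have hfz : f z = z * dslope f 0 z := by simpa [hf0] using (sub_smul_dslope f 0 z).symm
  have hf_lower : 1 / 2 * ‖z‖ ^ 2 < ‖f z‖ := by
    have hz1 : ‖z‖ < 1 := mem_ball_zero_iff.mp hz
    have hz0' : 0 < ‖z‖ := norm_pos_iff.mpr hz0
    have := norm_sub_norm_le (1 : ℂ) (dslope f 0 z)
    rw [norm_sub_rev, norm_one] at this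
    rw [hfz, norm_mul]
    nlinarith
  have key : ‖z * deriv f z - f z‖ < ‖f z‖ := (hφ z hz).trans_lt hf_lower
  exact ⟨norm_pos_iff.mp ((norm_nonneg _).trans_lt key), Complex.re_div_pos_of_norm_sub_lt key⟩
end

section
/- Every function f in the class Ω satisfies Re(f'(z)) > 0 for all z in the unit disc; in particular, Re(f'(z)) ≥ 1 - |z| > 0. -/
/-!
Put `h = dslope f 0`, so that `f z = z h z` and `f' = h + z h'`. Then
`z f'(z) - f(z) = z² h'(z)`, and two applications of Schwarz's lemma to this function, bounded
by `1/2` on the disc, give `|h'| ≤ 1/2`. Since `h 0 = f'(0) = 1`, the mean value inequality gives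
`|h z - 1| ≤ |z|/2`, hence `|f'(z) - 1| ≤ |h z - 1| + |z h'(z)| ≤ |z|`, and
`Re f'(z) ≥ 1 - |z|`.
-/

open Metric Set

section

variable {𝕜 E : Type*} [NontriviallyNormedField 𝕜] [NormedAddCommGroup E] [NormedSpace 𝕜 E]

theorem deriv_eq_dslope_add_sub_smul_deriv_dslope {f : 𝕜 → E} {a z : 𝕜}
    (hd : DifferentiableAt 𝕜 (dslope f a) z) :
    deriv f z = dslope f a z + (z - a) • deriv (dslope f a) z := by
  have hf : f = fun w => f a + (w - a) • dslope f a w := by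
    funext w; rw [sub_smul_dslope, add_sub_cancel]
  have := (((hasDerivAt_id z).sub_const a).fun_smul hd.hasDerivAt).const_add (f a)
  rw [hf]
  simpa [add_comm] using this.deriv

theorem sub_smul_deriv_sub_eq_sq_smul_deriv_dslope {f : 𝕜 → E} {a z : 𝕜}
    (hd : DifferentiableAt 𝕜 (dslope f a) z) :
    (z - a) • deriv f z - (f z - f a) = (z - a) ^ 2 • deriv (dslope f a) z := by
  rw [deriv_eq_dslope_add_sub_smul_deriv_dslope hd, ← sub_smul_dslope f a z, smul_add,
    smul_smul, sq, add_sub_cancel_left]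

end

section

variable {E : Type*} [NormedAddCommGroup E] [NormedSpace ℂ E]

theorem Complex.norm_le_div_of_norm_sub_smul_le {φ : ℂ → E} {c z : ℂ} {R M : ℝ}
    (hφ : DifferentiableOn ℂ φ (ball c R)) (hM : ∀ w ∈ ball c R, ‖(w - c) • φ w‖ ≤ M)
    (hz : z ∈ ball c R) : ‖φ z‖ ≤ M / R := by
  have hd : DifferentiableOn ℂ (fun w => (w - c) • φ w) (ball c R) :=
    (differentiableOn_id.sub_const c).smul hφ
  have hmaps : MapsTo (fun w => (w - c) • φ w) (ball c R) (closedBall ((c - c) • φ c) M) :=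
    fun w hw => by simpa using hM w hw
  have hslope : dslope (fun w => (w - c) • φ w) c z = φ z := by
    rcases eq_or_ne z c with rfl | hne
    · rw [dslope_same]
      have := ((hasDerivAt_id z).sub_const z).fun_smul
        ((hφ.differentiableAt (isOpen_ball.mem_nhds hz)).hasDerivAt)
      simpa using this.deriv
    · exact dslope_sub_smul_of_ne φ hne
  simpa [hslope] using Complex.norm_dslope_le_div_of_mapsTo_ball hd hmaps hz

theorem Complex.norm_deriv_sub_deriv_zero_le [CompleteSpace E] {f : ℂ → E} {M : ℝ} {z : ℂ}
    (hf : DifferentiableOn ℂ f (ball 0 1))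
    (hM : ∀ w ∈ ball (0 : ℂ) 1, ‖w • deriv f w - (f w - f 0)‖ ≤ M) (hz : z ∈ ball (0 : ℂ) 1) :
    ‖deriv f z - deriv f 0‖ ≤ 2 * M * ‖z‖ := by
  set h := dslope f 0
  have hh : DifferentiableOn ℂ h (ball 0 1) :=
    (Complex.differentiableOn_dslope (ball_mem_nhds 0 one_pos)).2 hf
  have hh' : DifferentiableOn ℂ (deriv h) (ball 0 1) := hh.deriv isOpen_ball
  have hdiff : ∀ w ∈ ball (0 : ℂ) 1, DifferentiableAt ℂ h w :=
    fun w hw => hh.differentiableAt (isOpen_ball.mem_nhds hw)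
  have hbound : ∀ w ∈ ball (0 : ℂ) 1, ‖deriv h w‖ ≤ M := by
    have hsq : ∀ w ∈ ball (0 : ℂ) 1, ‖(w - 0) • (w - 0) • deriv h w‖ ≤ M := fun w hw => by
      rw [smul_smul, ← sq, ← sub_smul_deriv_sub_eq_sq_smul_deriv_dslope (hdiff w hw)]
      simpa using hM w hw
    have hlin : ∀ w ∈ ball (0 : ℂ) 1, ‖(w - 0) • deriv h w‖ ≤ M := fun w hw => by
      simpa using Complex.norm_le_div_of_norm_sub_smul_le
        ((differentiableOn_id.sub_const 0).smul hh') hsq hw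
    simpa using fun w hw => Complex.norm_le_div_of_norm_sub_smul_le hh' hlin hw
  have hmvt : ‖h z - h 0‖ ≤ M * ‖z‖ := by
    simpa using (convex_ball (0 : ℂ) 1).norm_image_sub_le_of_norm_deriv_le hdiff hbound
      (mem_ball_self one_pos) hz
  calc ‖deriv f z - deriv f 0‖ = ‖(h z - h 0) + z • deriv h z‖ := by
        rw [deriv_eq_dslope_add_sub_smul_deriv_dslope (hdiff z hz), ← dslope_same f 0, sub_zero]
        congr 1; abel
    _ ≤ ‖h z - h 0‖ + ‖z‖ * ‖deriv h z‖ := (norm_add_le _ _).trans_eq (by rw [norm_smul])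
    _ ≤ M * ‖z‖ + ‖z‖ * M := by gcongr; exact hbound z hz
    _ = 2 * M * ‖z‖ := by ring

end

theorem stmt_5 (f : ℂ → ℂ) (hf : AnalyticOnNhd ℂ f (ball 0 1))
    (hf0 : f 0 = 0) (hf1 : deriv f 0 = 1)
    (hΩ : ∀ z ∈ ball (0 : ℂ) 1, ‖z * deriv f z - f z‖ < 1 / 2) :
    ∀ z ∈ ball (0 : ℂ) 1, 1 - ‖z‖ ≤ (deriv f z).re ∧ 0 < (deriv f z).re := by
  intro z hz
  have hnorm : ‖deriv f z - 1‖ ≤ ‖z‖ := by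
    have := Complex.norm_deriv_sub_deriv_zero_le hf.differentiableOn (M := 1 / 2)
      (fun w hw => by simpa [hf0] using (hΩ w hw).le) hz
    simpa [hf1] using this
  have hre : 1 - ‖z‖ ≤ (deriv f z).re := by
    have := (abs_le.1 (Complex.abs_re_le_norm (deriv f z - 1))).1
    rw [Complex.sub_re, Complex.one_re] at this
    linarith
  have hz1 : ‖z‖ < 1 := mem_ball_zero_iff.1 hz
  exact ⟨hre, by linarith⟩
end

section
/- (Keogh–Merkes) Let p(z) = 1 + p₁z + p₂z² + ⋯ be analytic on the unit disc with Re p(z) > 0. Then for any complex number μ, |p₂ - μ p₁²| ≤ 2 max{1, |2μ - 1|}. -/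
/-!
The Cayley transform `ω = (p - 1) / (p + 1)` maps the disc into itself and fixes `0`. Writing
`c₁ = ω'(0)` and `c₂ = ω''(0) / 2`, the relation `ω (p + 1) = p - 1` gives `p₁ = 2 c₁` and
`p₂ = 2 c₂ + 2 c₁²`, hence `p₂ - μ p₁² = 2 c₂ + 2 (1 - 2μ) c₁²`. The Schwarz–Pick inequality
`|g'(0)| ≤ 1 - |g(0)|²` for `g(z) = ω(z) / z` reads `|c₂| ≤ 1 - |c₁|²`, so `|p₂ - μ p₁²|` is at
most `2` times a convex combination of `1` and `|2μ - 1|`.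
-/

open Metric Set Filter Topology ComplexConjugate

noncomputable def blaschkeFactor (a z : ℂ) : ℂ := (z - a) / (1 - conj a * z)

lemma one_sub_conj_mul_ne_zero {a z : ℂ} (ha : ‖a‖ < 1) (hz : ‖z‖ ≤ 1) :
    1 - conj a * z ≠ 0 := by
  rw [sub_ne_zero]
  intro h
  have : ‖conj a * z‖ < 1 := by
    rw [norm_mul, Complex.norm_conj]
    nlinarith [norm_nonneg a, norm_nonneg z]
  rw [← h, norm_one] at this
  exact this.false

lemma normSq_one_sub_conj_mul_sub_normSq_sub (a z : ℂ) :
    Complex.normSq (1 - conj a * z) - Complex.normSq (z - a)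
      = (1 - Complex.normSq a) * (1 - Complex.normSq z) := by
  simp only [Complex.normSq_apply, Complex.sub_re, Complex.sub_im, Complex.mul_re,
    Complex.mul_im, Complex.one_re, Complex.one_im, Complex.conj_re, Complex.conj_im]
  ring

lemma norm_blaschkeFactor_lt_one {a z : ℂ} (ha : ‖a‖ < 1) (hz : ‖z‖ < 1) :
    ‖blaschkeFactor a z‖ < 1 := by
  have hid := normSq_one_sub_conj_mul_sub_normSq_sub a z
  simp only [Complex.normSq_eq_norm_sq] at hid
  rw [blaschkeFactor, norm_div, div_lt_one (norm_pos_iff.mpr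
    (one_sub_conj_mul_ne_zero ha hz.le))]
  have : ‖z - a‖ ^ 2 < ‖1 - conj a * z‖ ^ 2 := by
    nlinarith [mul_pos (by nlinarith [norm_nonneg a] : (0 : ℝ) < 1 - ‖a‖ ^ 2)
      (by nlinarith [norm_nonneg z] : (0 : ℝ) < 1 - ‖z‖ ^ 2)]
  exact lt_of_pow_lt_pow_left₀ 2 (norm_nonneg _) this

lemma differentiableAt_blaschkeFactor {a z : ℂ} (ha : ‖a‖ < 1) (hz : ‖z‖ ≤ 1) :
    DifferentiableAt ℂ (blaschkeFactor a) z :=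
  (differentiableAt_id.sub_const a).div ((differentiableAt_id.const_mul _).const_sub 1)
    (one_sub_conj_mul_ne_zero ha hz)

lemma hasDerivAt_blaschkeFactor_self {a : ℂ} (ha : ‖a‖ < 1) :
    HasDerivAt (blaschkeFactor a) (1 - (‖a‖ : ℂ) ^ 2)⁻¹ a := by
  have hden := one_sub_conj_mul_ne_zero ha ha.le
  have := ((hasDerivAt_id' a).sub_const a).fun_div
    (((hasDerivAt_id' a).const_mul (conj a)).const_sub 1) hden
  rw [Complex.conj_mul'] at hden this
  refine this.congr_deriv ?_
  field_simp
  ring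

lemma blaschkeFactor_self (a : ℂ) : blaschkeFactor a a = 0 := by
  simp [blaschkeFactor]

theorem norm_deriv_le_one_sub_sq_of_mapsTo_ball {g : ℂ → ℂ}
    (hg : DifferentiableOn ℂ g (ball 0 1)) (hmaps : MapsTo g (ball 0 1) (ball 0 1)) :
    ‖deriv g 0‖ ≤ 1 - ‖g 0‖ ^ 2 := by
  have hmem : (0 : ℂ) ∈ ball (0 : ℂ) 1 := mem_ball_self one_pos
  set a := g 0
  have ha : ‖a‖ < 1 := mem_ball_zero_iff.mp (hmaps hmem)
  have hsq : 0 < 1 - ‖a‖ ^ 2 := by nlinarith [norm_nonneg a]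
  have hcomp : DifferentiableOn ℂ (blaschkeFactor a ∘ g) (ball 0 1) := fun z hz =>
    (differentiableAt_blaschkeFactor ha (mem_ball_zero_iff.mp (hmaps hz)).le
      ).comp_differentiableWithinAt z (hg z hz)
  have hcomp_maps : MapsTo (blaschkeFactor a ∘ g) (ball 0 1)
      (closedBall ((blaschkeFactor a ∘ g) 0) 1) := fun z hz => by
    rw [mem_closedBall, Function.comp_apply, Function.comp_apply, blaschkeFactor_self,
      dist_zero_right]
    exact (norm_blaschkeFactor_lt_one ha (mem_ball_zero_iff.mp (hmaps hz))).le
  have hderiv : deriv (blaschkeFactor a ∘ g) 0 = (1 - (‖a‖ : ℂ) ^ 2)⁻¹ * deriv g 0 :=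
    ((hasDerivAt_blaschkeFactor_self ha).comp 0
      (hg.differentiableAt (isOpen_ball.mem_nhds hmem)).hasDerivAt).deriv
  have hschwarz := Complex.norm_deriv_le_one_of_mapsTo_ball hcomp hcomp_maps one_pos
  rw [hderiv, norm_mul, norm_inv, show (1 : ℂ) - (‖a‖ : ℂ) ^ 2 = ((1 - ‖a‖ ^ 2 : ℝ) : ℂ) by
    push_cast; ring, Complex.norm_real, Real.norm_of_nonneg hsq.le, inv_mul_le_iff₀ hsq,
    mul_one] at hschwarz
  exact hschwarz

theorem norm_deriv_le_one_sub_sq_of_mapsTo_closedBall {g : ℂ → ℂ}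
    (hg : DifferentiableOn ℂ g (ball 0 1)) (hmaps : MapsTo g (ball 0 1) (closedBall 0 1)) :
    ‖deriv g 0‖ ≤ 1 - ‖g 0‖ ^ 2 := by
  have hmem : (0 : ℂ) ∈ ball (0 : ℂ) 1 := mem_ball_self one_pos
  rcases (hg.analyticOnNhd isOpen_ball).is_constant_or_isOpen (convex_ball 0 1).isPreconnected
    with ⟨w, hw⟩ | hopen
  · have hconst : g =ᶠ[𝓝 0] fun _ => w := eventually_of_mem (isOpen_ball.mem_nhds hmem) hw
    have hw1 : ‖w‖ ≤ 1 := by simpa [hw 0 hmem] using hmaps hmem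
    rw [hconst.deriv_eq, deriv_const, norm_zero, hw 0 hmem]
    nlinarith [norm_nonneg w]
  · refine norm_deriv_le_one_sub_sq_of_mapsTo_ball hg fun z hz => ?_
    have hsub := interior_maximal (mapsTo_iff_image_subset.mp hmaps)
      (hopen _ subset_rfl isOpen_ball)
    rw [interior_closedBall (0 : ℂ) one_ne_zero] at hsub
    exact hsub (mem_image_of_mem g hz)

theorem iteratedDeriv_two_mul {𝕜 𝔸 : Type*} [NontriviallyNormedField 𝕜] [NormedRing 𝔸]
    [NormedAlgebra 𝕜 𝔸] {f g : 𝕜 → 𝔸} {x : 𝕜} (hf : ContDiffAt 𝕜 2 f x)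
    (hg : ContDiffAt 𝕜 2 g x) :
    iteratedDeriv 2 (fun y => f y * g y) x =
      iteratedDeriv 2 f x * g x + 2 * (deriv f x * deriv g x) + f x * iteratedDeriv 2 g x := by
  rw [iteratedDeriv_fun_mul hf hg]
  simp only [Finset.sum_range_succ, Finset.range_one, Finset.sum_singleton, Nat.choose_zero_right,
    Nat.choose_succ_self_right, Nat.choose_self, Nat.cast_one, Nat.cast_ofNat, iteratedDeriv_zero,
    iteratedDeriv_one, one_mul, mul_assoc, Nat.reduceAdd, tsub_zero, Nat.add_one_sub_one, tsub_self]
  abel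

theorem norm_iteratedDeriv_two_div_two_le {ω : ℂ → ℂ} (hω : DifferentiableOn ℂ ω (ball 0 1))
    (hmaps : MapsTo ω (ball 0 1) (closedBall 0 1)) (h0 : ω 0 = 0) :
    ‖iteratedDeriv 2 ω 0 / 2‖ ≤ 1 - ‖deriv ω 0‖ ^ 2 := by
  have hmem : (0 : ℂ) ∈ ball (0 : ℂ) 1 := mem_ball_self one_pos
  set g := dslope ω 0
  have hg : DifferentiableOn ℂ g (ball 0 1) :=
    (Complex.differentiableOn_dslope (isOpen_ball.mem_nhds hmem)).mpr hω
  have hg_maps : MapsTo g (ball 0 1) (closedBall 0 1) := fun z hz => by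
    simpa using Complex.norm_dslope_le_div_of_mapsTo_ball hω (by rwa [h0]) hz
  have hω_eq : ω = fun z => z * g z := funext fun z => by
    simpa [h0] using (sub_smul_dslope ω 0 z).symm
  have h2 : iteratedDeriv 2 ω 0 = 2 * deriv g 0 := by
    rw [hω_eq, iteratedDeriv_two_mul (f := fun z => z) contDiffAt_id
      (hg.analyticOnNhd isOpen_ball 0 hmem).contDiffAt]
    simp [iteratedDeriv_fun_id_zero]
  rw [h2, ← dslope_same ω 0, mul_div_cancel_left₀ _ two_ne_zero]
  exact norm_deriv_le_one_sub_sq_of_mapsTo_closedBall hg hg_maps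

lemma add_one_ne_zero_of_re_pos {w : ℂ} (hw : 0 < w.re) : w + 1 ≠ 0 := by
  intro h
  have := congrArg Complex.re h
  simp only [Complex.add_re, Complex.one_re, Complex.zero_re] at this
  linarith

lemma norm_sub_one_div_add_one_lt_one {w : ℂ} (hw : 0 < w.re) : ‖(w - 1) / (w + 1)‖ < 1 := by
  rw [norm_div, div_lt_one (norm_pos_iff.mpr (add_one_ne_zero_of_re_pos hw))]
  have : ‖w - 1‖ ^ 2 < ‖w + 1‖ ^ 2 := by
    simp only [← Complex.normSq_eq_norm_sq, Complex.normSq_apply, Complex.sub_re,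
      Complex.sub_im, Complex.add_re, Complex.add_im, Complex.one_re, Complex.one_im]
    linarith
  exact lt_of_pow_lt_pow_left₀ 2 (norm_nonneg _) this

section CayleyTransform

variable {𝕜 : Type*} [NontriviallyNormedField 𝕜] {p ω : 𝕜 → 𝕜} {x : 𝕜}

lemma deriv_eq_two_mul_deriv_of_mul_add_one_eq (hp : DifferentiableAt 𝕜 p x)
    (hω : DifferentiableAt 𝕜 ω x) (hωx : ω x = 0)
    (hrel : (fun z => ω z * (p z + 1)) =ᶠ[𝓝 x] fun z => p z - 1) :
    deriv p x = 2 * deriv ω x := by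
  have hpx : p x = 1 := sub_eq_zero.mp (by simpa [hωx] using hrel.eq_of_nhds.symm)
  have := hrel.deriv_eq
  rw [deriv_fun_mul hω (hp.add_const 1), deriv_add_const, deriv_sub_const, hpx, hωx] at this
  linear_combination -this

lemma iteratedDeriv_two_eq_of_mul_add_one_eq (hp : ContDiffAt 𝕜 2 p x)
    (hω : ContDiffAt 𝕜 2 ω x) (hωx : ω x = 0)
    (hrel : (fun z => ω z * (p z + 1)) =ᶠ[𝓝 x] fun z => p z - 1) :
    iteratedDeriv 2 p x = 2 * iteratedDeriv 2 ω x + 4 * deriv ω x ^ 2 := by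
  have hpx : p x = 1 := sub_eq_zero.mp (by simpa [hωx] using hrel.eq_of_nhds.symm)
  have hderiv := deriv_eq_two_mul_deriv_of_mul_add_one_eq
    (hp.differentiableAt two_ne_zero) (hω.differentiableAt two_ne_zero) hωx hrel
  have := hrel.iteratedDeriv_eq 2
  rw [iteratedDeriv_two_mul hω (hp.add contDiffAt_const),
    iteratedDeriv_fun_add hp contDiffAt_const, iteratedDeriv_fun_sub hp contDiffAt_const,
    deriv_add_const, hpx, hωx, hderiv] at this
  simp only [iteratedDeriv_const, OfNat.ofNat_ne_zero, ite_false, add_zero, sub_zero] at this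
  linear_combination -this

end CayleyTransform

lemma norm_two_mul_add_two_mul_sq_le {c₁ c₂ : ℂ} (μ : ℂ) (h : ‖c₂‖ ≤ 1 - ‖c₁‖ ^ 2) :
    ‖2 * c₂ + 2 * (1 - 2 * μ) * c₁ ^ 2‖ ≤ 2 * max 1 ‖2 * μ - 1‖ := by
  have hc₁ : ‖c₁‖ ^ 2 ≤ 1 := by linarith [norm_nonneg c₂]
  have hM₁ : 1 ≤ max 1 ‖2 * μ - 1‖ := le_max_left _ _
  have hM₂ : ‖2 * μ - 1‖ ≤ max 1 ‖2 * μ - 1‖ := le_max_right _ _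
  calc ‖2 * c₂ + 2 * (1 - 2 * μ) * c₁ ^ 2‖
      ≤ 2 * ‖c₂‖ + 2 * ‖2 * μ - 1‖ * ‖c₁‖ ^ 2 := by
        refine (norm_add_le _ _).trans_eq ?_
        rw [norm_mul, norm_mul, norm_mul, norm_pow, ← norm_neg (1 - 2 * μ), neg_sub,
          Complex.norm_two]
    _ ≤ 2 * (1 - ‖c₁‖ ^ 2) * 1 + 2 * ‖c₁‖ ^ 2 * ‖2 * μ - 1‖ := by nlinarith
    _ ≤ 2 * max 1 ‖2 * μ - 1‖ := by nlinarith [sq_nonneg ‖c₁‖]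

theorem stmt_13 (p : ℂ → ℂ) (hp : AnalyticOnNhd ℂ p (ball 0 1))
    (hp0 : p 0 = 1) (hre : ∀ z ∈ ball (0 : ℂ) 1, 0 < (p z).re) :
    ∀ μ : ℂ, ‖iteratedDeriv 2 p 0 / 2 - μ * (deriv p 0) ^ 2‖ ≤
      2 * max 1 ‖2 * μ - 1‖ := by
  intro μ
  have hmem : (0 : ℂ) ∈ ball (0 : ℂ) 1 := mem_ball_self one_pos
  have hne : ∀ z ∈ ball (0 : ℂ) 1, p z + 1 ≠ 0 := fun z hz =>
    add_one_ne_zero_of_re_pos (hre z hz)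
  set ω : ℂ → ℂ := fun z => (p z - 1) / (p z + 1)
  have hω : AnalyticOnNhd ℂ ω (ball 0 1) :=
    (hp.sub analyticOnNhd_const).div (hp.add analyticOnNhd_const) hne
  have hω0 : ω 0 = 0 := by simp [ω, hp0]
  have hω_maps : MapsTo ω (ball 0 1) (closedBall 0 1) := fun z hz =>
    mem_closedBall_zero_iff.mpr (norm_sub_one_div_add_one_lt_one (hre z hz)).le
  have hrel : (fun z => ω z * (p z + 1)) =ᶠ[𝓝 0] fun z => p z - 1 :=
    eventually_of_mem (isOpen_ball.mem_nhds hmem) fun z hz => div_mul_cancel₀ _ (hne z hz)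
  have h₁ := deriv_eq_two_mul_deriv_of_mul_add_one_eq (hp 0 hmem).differentiableAt
    (hω 0 hmem).differentiableAt hω0 hrel
  have h₂ := iteratedDeriv_two_eq_of_mul_add_one_eq (hp 0 hmem).contDiffAt
    (hω 0 hmem).contDiffAt hω0 hrel
  have hcoeff : iteratedDeriv 2 p 0 / 2 - μ * deriv p 0 ^ 2 =
      2 * (iteratedDeriv 2 ω 0 / 2) + 2 * (1 - 2 * μ) * deriv ω 0 ^ 2 := by
    rw [h₁, h₂]
    ring
  rw [hcoeff]
  exact norm_two_mul_add_two_mul_sq_le μ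
    (norm_iteratedDeriv_two_div_two_le hω.differentiableOn hω_maps hω0)
end

section
/- (Fekete–Szegő problem for Ω) Let f(z) = z + a₂z² + a₃z³ + ⋯ belong to the class Ω. Then for any complex number μ, |a₃ - μ a₂²| ≤ (1/4) max{1, |μ|}. -/
/-!
With `F z = 2 (z f'(z) - f(z))` we have `F' z = 2 z f''(z)`, so `F` maps the unit disc into itself
and vanishes to second order at `0`. By the Schwarz lemma `φ = F / z²` is again a self-map of the
closed disc, with `φ 0 = 2 a₂` and `φ' 0 = 4 a₃`. The Schwarz–Pick inequality
`|φ' 0| ≤ 1 - |φ 0|²` then gives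
`4 |a₃ - μ a₂²| ≤ (1 - |φ 0|²) + |μ| |φ 0|² ≤ max 1 |μ|`.
-/

section Coefficients

variable {𝕜 : Type*} [NontriviallyNormedField 𝕜]

theorem AnalyticAt.dslope_self {E : Type*} [NormedAddCommGroup E] [NormedSpace 𝕜 E]
    {g : 𝕜 → E} {c : 𝕜} (hg : AnalyticAt 𝕜 g c) : AnalyticAt 𝕜 (dslope g c) c :=
  let ⟨_, hp⟩ := hg
  hp.has_fpower_series_dslope_fslope.analyticAt

variable [CompleteSpace 𝕜]

theorem AnalyticAt.iteratedDeriv_dslope_self [CharZero 𝕜] {g : 𝕜 → 𝕜} {c : 𝕜}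
    (hg : AnalyticAt 𝕜 g c) (n : ℕ) :
    iteratedDeriv n (dslope g c) c = iteratedDeriv (n + 1) g c / (n + 1) := by
  have hslope := hg.hasFPowerSeriesAt.has_fpower_series_dslope_fslope
  have hcoeff := congrArg (·.coeff n)
    (hslope.analyticAt.hasFPowerSeriesAt.eq_formalMultilinearSeries hslope)
  simp only [FormalMultilinearSeries.coeff_fslope, FormalMultilinearSeries.coeff_ofScalars,
    Nat.factorial_succ, Nat.cast_mul] at hcoeff
  have := Nat.factorial_ne_zero n
  field_simp at hcoeff
  rw [eq_div_iff (Nat.cast_add_one_ne_zero n)]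
  exact_mod_cast hcoeff

theorem AnalyticAt.iteratedDeriv_succ_mul_deriv_sub {f : 𝕜 → 𝕜} (hf : AnalyticAt 𝕜 f 0)
    (n : ℕ) :
    iteratedDeriv (n + 1) (fun z ↦ z * deriv f z - f z) 0 = n * iteratedDeriv (n + 1) f 0 := by
  have hf' : ContDiffAt 𝕜 (n + 1 : ℕ) (deriv f) 0 := hf.deriv.contDiffAt
  rw [iteratedDeriv_fun_sub (f := fun z ↦ z * deriv f z) (contDiffAt_id.mul hf') hf.contDiffAt,
    iteratedDeriv_fun_mul (f := fun z ↦ z) contDiffAt_id hf']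
  simp [Finset.sum_range_succ', iteratedDeriv_fun_id, ← iteratedDeriv_succ', add_mul]

end Coefficients

open Metric Set Filter Topology ComplexConjugate

namespace Complex

noncomputable def blaschkeFactor (b w : ℂ) : ℂ := (w - b) / (1 - conj b * w)

variable {b w : ℂ}

theorem one_sub_conj_mul_ne_zero (hb : ‖b‖ < 1) (hw : ‖w‖ ≤ 1) :
    1 - conj b * w ≠ 0 := by
  refine sub_ne_zero.2 fun h ↦ ?_
  have : ‖conj b * w‖ < 1 := by
    rw [norm_mul, norm_conj]
    nlinarith [norm_nonneg b, norm_nonneg w]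
  simp [← h] at this

theorem normSq_one_sub_conj_mul_sub_normSq_sub (b w : ℂ) :
    normSq (1 - conj b * w) - normSq (w - b) = (1 - normSq b) * (1 - normSq w) := by
  simp only [normSq_apply, sub_re, sub_im, mul_re, mul_im, one_re, one_im, conj_re, conj_im]
  ring

theorem norm_blaschkeFactor_le_one (hb : ‖b‖ < 1) (hw : ‖w‖ ≤ 1) :
    ‖blaschkeFactor b w‖ ≤ 1 := by
  rw [blaschkeFactor, norm_div, div_le_one (norm_pos_iff.2 (one_sub_conj_mul_ne_zero hb hw)),
    norm_def, norm_def]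
  gcongr
  have hb' : normSq b ≤ 1 := by rw [normSq_eq_norm_sq]; nlinarith [norm_nonneg b]
  have hw' : normSq w ≤ 1 := by rw [normSq_eq_norm_sq]; nlinarith [norm_nonneg w]
  nlinarith [normSq_one_sub_conj_mul_sub_normSq_sub b w,
    mul_nonneg (sub_nonneg.2 hb') (sub_nonneg.2 hw')]

@[simp]
theorem blaschkeFactor_self (b : ℂ) : blaschkeFactor b b = 0 := by
  simp [blaschkeFactor]

theorem hasDerivAt_blaschkeFactor_self (hb : ‖b‖ < 1) :
    HasDerivAt (blaschkeFactor b) (1 / (1 - ‖b‖ ^ 2 : ℂ)) b := by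
  have hden : 1 - conj b * b ≠ 0 := one_sub_conj_mul_ne_zero hb hb.le
  refine (((hasDerivAt_id' b).sub_const b).fun_div
    (((hasDerivAt_id' b).const_mul (conj b)).const_sub 1) hden).congr_deriv ?_
  rw [conj_mul'] at hden ⊢
  field_simp
  ring

theorem differentiableAt_blaschkeFactor (hb : ‖b‖ < 1) (hw : ‖w‖ ≤ 1) :
    DifferentiableAt ℂ (blaschkeFactor b) w := by
  unfold blaschkeFactor
  fun_prop (disch := exact one_sub_conj_mul_ne_zero hb hw)

theorem norm_deriv_le_one_sub_norm_sq_div_of_mapsTo_ball {φ : ℂ → ℂ} {c : ℂ} {R : ℝ}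
    (hd : DifferentiableOn ℂ φ (ball c R)) (hmaps : MapsTo φ (ball c R) (closedBall 0 1))
    (hR : 0 < R) : ‖deriv φ c‖ ≤ (1 - ‖φ c‖ ^ 2) / R := by
  have hnhds : ball c R ∈ 𝓝 c := ball_mem_nhds c hR
  have hφ (z) (hz : z ∈ ball c R) : ‖φ z‖ ≤ 1 := mem_closedBall_zero_iff.1 (hmaps hz)
  rcases (hφ c (mem_ball_self hR)).lt_or_eq with hlt | heq
  · set b := φ c
    have hΨd : DifferentiableOn ℂ (blaschkeFactor b ∘ φ) (ball c R) := fun z hz ↦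
      ((differentiableAt_blaschkeFactor hlt (hφ z hz)).comp z
        (hd.differentiableAt (isOpen_ball.mem_nhds hz))).differentiableWithinAt
    have hΨmaps : MapsTo (blaschkeFactor b ∘ φ) (ball c R)
        (closedBall ((blaschkeFactor b ∘ φ) c) 1) := fun z hz ↦ by
      simpa [b] using norm_blaschkeFactor_le_one hlt (hφ z hz)
    have hΨ' := (hasDerivAt_blaschkeFactor_self hlt).comp c
      (hd.differentiableAt hnhds).hasDerivAt
    have hpos : 0 < 1 - ‖b‖ ^ 2 := by nlinarith [norm_nonneg b]
    have hSchwarz := norm_deriv_le_div_of_mapsTo_ball hΨd hΨmaps hR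
    rw [hΨ'.deriv, norm_mul, norm_div, norm_one, ← ofReal_one, ← ofReal_pow, ← ofReal_sub,
      norm_real, Real.norm_of_nonneg hpos.le] at hSchwarz
    rw [le_div_iff₀ hR]
    rw [div_mul_eq_mul_div, one_mul, div_le_div_iff₀ hpos hR] at hSchwarz
    linarith
  · have hmax : IsLocalMax (norm ∘ φ) c := by
      filter_upwards [hnhds] with z hz
      simpa [← heq] using hφ z hz
    have hconst := eventually_eq_of_isLocalMax_norm (hd.eventually_differentiableAt hnhds) hmax
    rw [Filter.EventuallyEq.deriv_eq hconst, deriv_const, heq]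
    norm_num

theorem mapsTo_dslope_dslope_of_mapsTo_ball {F : ℂ → ℂ} {c : ℂ}
    (hd : DifferentiableOn ℂ F (ball c 1)) (hmaps : MapsTo F (ball c 1) (closedBall 0 1))
    (hF : F c = 0) (hF' : deriv F c = 0) :
    MapsTo (dslope (dslope F c) c) (ball c 1) (closedBall 0 1) := by
  have hslope : MapsTo (dslope F c) (ball c 1) (closedBall (dslope F c c) 1) := fun z hz ↦ by
    simpa [hF'] using norm_dslope_le_div_of_mapsTo_ball hd (by rwa [hF]) hz
  have hslope_d : DifferentiableOn ℂ (dslope F c) (ball c 1) :=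
    (differentiableOn_dslope (ball_mem_nhds c one_pos)).2 hd
  exact fun z hz ↦ by simpa using norm_dslope_le_div_of_mapsTo_ball hslope_d hslope hz

theorem norm_sub_mul_sq_le_max {a b : ℂ} (h : ‖b‖ ≤ 1 - ‖a‖ ^ 2) (μ : ℂ) :
    ‖b - μ * a ^ 2‖ ≤ max 1 ‖μ‖ := by
  have ha : ‖a‖ ^ 2 ≤ 1 := by linarith [norm_nonneg b]
  calc ‖b - μ * a ^ 2‖ ≤ ‖b‖ + ‖μ‖ * ‖a‖ ^ 2 := by
        rw [← norm_pow, ← norm_mul]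
        exact norm_sub_le b (μ * a ^ 2)
    _ ≤ (1 - ‖a‖ ^ 2) * max 1 ‖μ‖ + ‖a‖ ^ 2 * max 1 ‖μ‖ := by
        nlinarith [le_max_left 1 ‖μ‖, le_max_right 1 ‖μ‖, sq_nonneg ‖a‖]
    _ = max 1 ‖μ‖ := by ring

end Complex

open Complex

theorem exists_selfMap_of_norm_mul_deriv_sub_lt_half {f : ℂ → ℂ}
    (hf : AnalyticOnNhd ℂ f (ball 0 1)) (hf0 : f 0 = 0)
    (hΩ : ∀ z ∈ ball (0 : ℂ) 1, ‖z * deriv f z - f z‖ < 1 / 2) :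
    ∃ φ : ℂ → ℂ, DifferentiableOn ℂ φ (ball 0 1) ∧ MapsTo φ (ball 0 1) (closedBall 0 1) ∧
      φ 0 = iteratedDeriv 2 f 0 ∧ deriv φ 0 = 2 / 3 * iteratedDeriv 3 f 0 := by
  set F : ℂ → ℂ := fun z ↦ 2 * (z * deriv f z - f z)
  have hFa : AnalyticOnNhd ℂ F (ball 0 1) := fun z hz ↦
    analyticAt_const.mul ((analyticAt_id.mul (hf.deriv z hz)).sub (hf z hz))
  have hF : MapsTo F (ball 0 1) (closedBall 0 1) := fun z hz ↦ by
    simp only [F, mem_closedBall_zero_iff, norm_mul, RCLike.norm_ofNat]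
    linarith [hΩ z hz]
  have hF0 : F 0 = 0 := by simp [F, hf0]
  have hFcoeff (n : ℕ) : iteratedDeriv (n + 1) F 0 = 2 * n * iteratedDeriv (n + 1) f 0 := by
    rw [iteratedDeriv_const_mul_field,
      (hf 0 (mem_ball_self one_pos)).iteratedDeriv_succ_mul_deriv_sub, mul_assoc]
  have hF' : deriv F 0 = 0 := by simpa using hFcoeff 0
  have hF_an := hFa 0 (mem_ball_self one_pos)
  have hφcoeff (n : ℕ) : iteratedDeriv n (dslope (dslope F 0) 0) 0 =
      iteratedDeriv (n + 2) F 0 / ((n + 1) * (n + 2)) := by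
    rw [hF_an.dslope_self.iteratedDeriv_dslope_self, hF_an.iteratedDeriv_dslope_self]
    push_cast
    field_simp
    ring
  refine ⟨dslope (dslope F 0) 0, ?_,
    mapsTo_dslope_dslope_of_mapsTo_ball hFa.differentiableOn hF hF0 hF', ?_, ?_⟩
  · simp only [differentiableOn_dslope (ball_mem_nhds 0 one_pos)]
    exact hFa.differentiableOn
  · simpa [hFcoeff] using hφcoeff 0
  · rw [← iteratedDeriv_one, hφcoeff, hFcoeff]
    push_cast
    ring

theorem stmt_14_general (f : ℂ → ℂ) (hf : AnalyticOnNhd ℂ f (ball 0 1))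
    (hf0 : f 0 = 0)
    (hΩ : ∀ z ∈ ball (0 : ℂ) 1, ‖z * deriv f z - f z‖ < 1 / 2) :
    ∀ μ : ℂ, ‖iteratedDeriv 3 f 0 / 6 - μ * (iteratedDeriv 2 f 0 / 2) ^ 2‖ ≤
      (1 / 4) * max 1 ‖μ‖ := by
  intro μ
  obtain ⟨φ, hφd, hφ, hφ0, hφ1⟩ := exists_selfMap_of_norm_mul_deriv_sub_lt_half hf hf0 hΩ
  have hSchwarzPick := norm_deriv_le_one_sub_norm_sq_div_of_mapsTo_ball hφd hφ one_pos
  rw [div_one, hφ0, hφ1] at hSchwarzPick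
  have hrescale : iteratedDeriv 3 f 0 / 6 - μ * (iteratedDeriv 2 f 0 / 2) ^ 2 =
      (2 / 3 * iteratedDeriv 3 f 0 - μ * iteratedDeriv 2 f 0 ^ 2) / 4 := by ring
  rw [hrescale, norm_div, RCLike.norm_ofNat]
  linarith [norm_sub_mul_sq_le_max hSchwarzPick μ]

theorem stmt_14 (f : ℂ → ℂ) (hf : AnalyticOnNhd ℂ f (ball 0 1))
    (hf0 : f 0 = 0) (hf1 : deriv f 0 = 1)
    (hΩ : ∀ z ∈ ball (0 : ℂ) 1, ‖z * deriv f z - f z‖ < 1 / 2) :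
    ∀ μ : ℂ, ‖iteratedDeriv 3 f 0 / 6 - μ * (iteratedDeriv 2 f 0 / 2) ^ 2‖ ≤
      (1 / 4) * max 1 ‖μ‖ :=
  stmt_14_general f hf hf0 hΩ
end

section
/- Let f ∈ Ω with inverse function f^{-1}(w) = w + Σ_{n≥2} b_n w^n near 0. Then |b₂| ≤ 1/2, |b₃| ≤ 1/2, and |b₄| ≤ 19/24. -/
/-!
Put `g z = z * f' z - f z = ∑ (n - 1) aₙ zⁿ`. The hypothesis says that `g` maps the unit disc
into the closed disc of radius `1/2`, and `g 0 = g' 0 = 0`. Two applications of the Schwarz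
lemma show that `φ = g / z²` still maps the unit disc into that disc; since `φ 0 = a₂` and
`φ' 0 = 2 a₃`, the Schwarz–Pick inequality at the origin gives `4 |a₃| ≤ 1 - 4 |a₂|²`, and
Cauchy's estimate for the fourth derivative of `g` gives `3 |a₄| ≤ 1/2`. The triangle inequality
then bounds `|b₃| ≤ 1/4 + |a₂|²` and `|b₄| ≤ 5 |a₂| / 4 + 1/6`.
-/

open Metric Set Filter ComplexConjugate

theorem norm_sub_le_norm_one_sub_conj_mul {c w : ℂ} (hc : ‖c‖ ≤ 1) (hw : ‖w‖ ≤ 1) :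
    ‖w - c‖ ≤ ‖1 - conj c * w‖ := by
  have key : Complex.normSq (1 - conj c * w) - Complex.normSq (w - c) =
      (1 - Complex.normSq c) * (1 - Complex.normSq w) := by
    simp only [Complex.normSq_apply, Complex.sub_re, Complex.sub_im, Complex.mul_re,
      Complex.mul_im, Complex.one_re, Complex.one_im, Complex.conj_re, Complex.conj_im]
    ring
  simp only [Complex.normSq_eq_norm_sq] at key
  have : 0 ≤ (1 - ‖c‖ ^ 2) * (1 - ‖w‖ ^ 2) :=
    mul_nonneg (by nlinarith [norm_nonneg c]) (by nlinarith [norm_nonneg w])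
  exact le_of_sq_le_sq (by linarith) (norm_nonneg _)

theorem norm_deriv_le_one_sub_sq_of_norm_lt_one {φ : ℂ → ℂ}
    (hd : DifferentiableOn ℂ φ (ball 0 1)) (hb : MapsTo φ (ball 0 1) (closedBall 0 1))
    (h0 : ‖φ 0‖ < 1) : ‖deriv φ 0‖ ≤ 1 - ‖φ 0‖ ^ 2 := by
  set c := φ 0
  have hB0 : (0 : ℂ) ∈ ball (0 : ℂ) 1 := mem_ball_self one_pos
  have hc : 0 ≤ 1 - ‖c‖ ^ 2 := by nlinarith [norm_nonneg c]
  have hden : ∀ z ∈ ball (0 : ℂ) 1, 1 - conj c * φ z ≠ 0 := by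
    intro z hz
    have hφz : ‖φ z‖ ≤ 1 := by simpa using hb hz
    have : ‖conj c * φ z‖ < 1 := by
      rw [norm_mul, RCLike.norm_conj]
      nlinarith [norm_nonneg c, norm_nonneg (φ z)]
    exact sub_ne_zero.2 fun h => by simp [← h] at this
  -- Compose `φ` with the disc automorphism `w ↦ (w - c) / (1 - c̄ w)`, whose derivative at `c`
  -- is `1 / (1 - |c|²)`, and apply the Schwarz lemma to the composite `σ`.
  set σ := fun z => (φ z - c) / (1 - conj c * φ z)
  have hσd : DifferentiableOn ℂ σ (ball 0 1) :=
    (hd.sub_const c).div ((differentiableOn_const _).sub (hd.const_mul _)) hden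
  have hσb : MapsTo σ (ball 0 1) (closedBall (σ 0) 1) := by
    intro z hz
    have hφz : ‖φ z‖ ≤ 1 := by simpa using hb hz
    simp only [σ, c, sub_self, zero_div, mem_closedBall_zero_iff, norm_div]
    exact div_le_one_of_le₀ (norm_sub_le_norm_one_sub_conj_mul h0.le hφz) (norm_nonneg _)
  have hconj : conj c * c = ((‖c‖ ^ 2 : ℝ) : ℂ) := by rw [Complex.conj_mul']; norm_cast
  have hσ' : deriv σ 0 * (1 - ‖c‖ ^ 2 : ℝ) = deriv φ 0 := by
    have hφ' := (hd.differentiableAt (isOpen_ball.mem_nhds hB0)).hasDerivAt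
    rw [((hφ'.sub_const c).fun_div ((hφ'.const_mul (conj c)).const_sub 1) (hden 0 hB0)).deriv]
    have hden0 : (1 : ℂ) - conj c * c ≠ 0 := hden 0 hB0
    rw [hconj] at hden0
    rw [show φ 0 = c from rfl, sub_self, zero_mul, sub_zero, hconj]
    push_cast at hden0 ⊢
    field_simp
  calc ‖deriv φ 0‖ = ‖deriv σ 0‖ * (1 - ‖c‖ ^ 2) := by
        rw [← hσ', norm_mul, Complex.norm_real, Real.norm_of_nonneg hc]
    _ ≤ 1 * (1 - ‖c‖ ^ 2) :=
        mul_le_mul_of_nonneg_right (Complex.norm_deriv_le_one_of_mapsTo_ball hσd hσb one_pos) hc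
    _ = 1 - ‖c‖ ^ 2 := one_mul _

theorem norm_deriv_le_one_sub_sq {φ : ℂ → ℂ} (hd : DifferentiableOn ℂ φ (ball 0 1))
    (hb : MapsTo φ (ball 0 1) (closedBall 0 1)) : ‖deriv φ 0‖ ≤ 1 - ‖φ 0‖ ^ 2 := by
  have hB0 : (0 : ℂ) ∈ ball (0 : ℂ) 1 := mem_ball_self one_pos
  rcases (show ‖φ 0‖ ≤ 1 by simpa using hb hB0).lt_or_eq with h0 | h0
  · exact norm_deriv_le_one_sub_sq_of_norm_lt_one hd hb h0
  · have hmax : IsMaxOn (norm ∘ φ) (ball 0 1) 0 := fun z hz => by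
      simpa [h0] using hb hz
    have hconst : φ =ᶠ[nhds 0] fun _ => φ 0 :=
      eventuallyEq_of_mem (isOpen_ball.mem_nhds hB0) <|
        Complex.eqOn_of_isPreconnected_of_isMaxOn_norm (convex_ball 0 1).isPreconnected
          isOpen_ball hd hB0 hmax
    simp [hconst.deriv_eq, h0]

theorem mul_norm_deriv_le_sq_sub_sq {φ : ℂ → ℂ} {M : ℝ} (hM : 0 < M)
    (hd : DifferentiableOn ℂ φ (ball 0 1)) (hb : MapsTo φ (ball 0 1) (closedBall 0 M)) :
    M * ‖deriv φ 0‖ ≤ M ^ 2 - ‖φ 0‖ ^ 2 := by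
  have hB0 : (0 : ℂ) ∈ ball (0 : ℂ) 1 := mem_ball_self one_pos
  have hscaled := norm_deriv_le_one_sub_sq (φ := fun z => (M : ℂ)⁻¹ * φ z) (hd.const_mul _)
    fun z hz => by
      have := hb hz
      simp only [mem_closedBall_zero_iff, norm_mul, norm_inv, Complex.norm_real,
        Real.norm_of_nonneg hM.le] at this ⊢
      rw [inv_mul_le_iff₀ hM]
      simpa using this
  rw [deriv_const_mul _ (hd.differentiableAt (isOpen_ball.mem_nhds hB0))] at hscaled
  simp only [norm_mul, norm_inv, Complex.norm_real, Real.norm_of_nonneg hM.le,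
    mul_pow] at hscaled
  field_simp at hscaled
  linarith

theorem mapsTo_dslope_zero_closedBall {g : ℂ → ℂ} {M : ℝ}
    (hd : DifferentiableOn ℂ g (ball 0 1)) (hg0 : g 0 = 0)
    (hb : MapsTo g (ball 0 1) (closedBall 0 M)) :
    MapsTo (dslope g 0) (ball 0 1) (closedBall 0 M) := fun _ hz => by
  simpa using Complex.norm_dslope_le_div_of_mapsTo_ball hd (by rwa [hg0]) hz

theorem eq_sq_mul_dslope_dslope {𝕜 : Type*} [NontriviallyNormedField 𝕜] {g : 𝕜 → 𝕜}
    (hg0 : g 0 = 0) (hg1 : deriv g 0 = 0) (z : 𝕜) :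
    g z = z ^ 2 * dslope (dslope g 0) 0 z := by
  have h₁ := sub_smul_dslope g 0 z
  have h₂ := sub_smul_dslope (dslope g 0) 0 z
  rw [dslope_same, hg1] at h₂
  simp only [sub_zero, smul_eq_mul, hg0] at h₁ h₂
  rw [← h₁, ← h₂]
  ring

theorem iteratedDeriv_pow_mul_zero {𝕜 : Type*} [NontriviallyNormedField 𝕜]
    {φ : 𝕜 → 𝕜} {n m : ℕ} (hφ : ContDiffAt 𝕜 (n + m) φ 0) :
    iteratedDeriv (n + m) (fun z => z ^ m * φ z) 0 =
      (n + m).choose m * m.factorial * iteratedDeriv n φ 0 := by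
  rw [iteratedDeriv_fun_mul (contDiffAt_fun_id.pow m) hφ, Finset.sum_eq_single m]
  · simp [Nat.descFactorial_self]
  · intro i _ hi
    rcases hi.lt_or_gt with hi | hi
    · simp [Nat.sub_eq_zero_iff_le, hi.not_ge]
    · simp [Nat.descFactorial_eq_zero_iff_lt.mpr hi]
  · intro h
    simp at h

theorem mul_norm_iteratedDeriv_three_le {g : ℂ → ℂ} {M : ℝ} (hM : 0 < M)
    (hd : DifferentiableOn ℂ g (ball 0 1)) (hg0 : g 0 = 0) (hg1 : deriv g 0 = 0)
    (hb : MapsTo g (ball 0 1) (closedBall 0 M)) :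
    M * ‖iteratedDeriv 3 g 0 / 6‖ ≤ M ^ 2 - ‖iteratedDeriv 2 g 0 / 2‖ ^ 2 := by
  set φ := dslope (dslope g 0) 0
  have hn : ball (0 : ℂ) 1 ∈ nhds 0 := ball_mem_nhds 0 one_pos
  have hd₁ : DifferentiableOn ℂ (dslope g 0) (ball 0 1) :=
    (Complex.differentiableOn_dslope hn).2 hd
  have hφd : DifferentiableOn ℂ φ (ball 0 1) := (Complex.differentiableOn_dslope hn).2 hd₁
  have hφb : MapsTo φ (ball 0 1) (closedBall 0 M) :=
    mapsTo_dslope_zero_closedBall hd₁ (by rwa [dslope_same])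
      (mapsTo_dslope_zero_closedBall hd hg0 hb)
  have hφ : ContDiffAt ℂ 3 φ 0 := (hφd.analyticAt hn).contDiffAt
  have hg : g = fun z => z ^ 2 * φ z := funext (eq_sq_mul_dslope_dslope hg0 hg1)
  have h₂ : iteratedDeriv 2 g 0 = 2 * φ 0 := by
    rw [hg]
    convert iteratedDeriv_pow_mul_zero (n := 0) (m := 2) (hφ.of_le (by norm_num)) using 1
    norm_num
  have h₃ : iteratedDeriv 3 g 0 = 6 * deriv φ 0 := by
    rw [hg]
    convert iteratedDeriv_pow_mul_zero (n := 1) (m := 2) (hφ.of_le (by norm_num)) using 1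
    norm_num
  rw [h₂, h₃, mul_div_cancel_left₀ _ two_ne_zero, mul_div_cancel_left₀ _ (by norm_num)]
  exact mul_norm_deriv_le_sq_sub_sq hM hφd hφb

theorem norm_iteratedDeriv_le_of_mapsTo_ball {E : Type*} [NormedAddCommGroup E]
    [NormedSpace ℂ E] [CompleteSpace E] {g : ℂ → E} {c : ℂ} {R M : ℝ} (hR : 0 < R)
    (hd : DifferentiableOn ℂ g (ball c R)) (hb : MapsTo g (ball c R) (closedBall 0 M))
    (n : ℕ) : ‖iteratedDeriv n g c‖ ≤ n.factorial * M / R ^ n := by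
  have hsmaller : ∀ r ∈ Ioo 0 R, ‖iteratedDeriv n g c‖ ≤ n.factorial * M / r ^ n :=
    fun r hr => Complex.norm_iteratedDeriv_le_of_forall_mem_sphere_norm_le n hr.1
      (hd.diffContOnCl_ball (closedBall_subset_ball hr.2))
      fun z hz => by simpa using hb (closedBall_subset_ball hr.2 (sphere_subset_closedBall hz))
  have hcont : ContinuousAt (fun r : ℝ => n.factorial * M / r ^ n) R := by
    fun_prop (disch := positivity)
  exact ge_of_tendsto (hcont.tendsto.mono_left nhdsWithin_le_nhds)
    (eventually_of_mem (Ioo_mem_nhdsLT hR) hsmaller)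

theorem iteratedDeriv_mul_deriv_sub_zero {𝕜 : Type*} [NontriviallyNormedField 𝕜]
    [CompleteSpace 𝕜] {f : 𝕜 → 𝕜} (hf : AnalyticAt 𝕜 f 0) (n : ℕ) :
    iteratedDeriv n (fun z => z * deriv f z - f z) 0 = (n - 1) * iteratedDeriv n f 0 := by
  have hd : ContDiffAt 𝕜 n (deriv f) 0 := hf.deriv.contDiffAt
  rw [iteratedDeriv_fun_sub (contDiffAt_fun_id.mul hd) hf.contDiffAt,
    iteratedDeriv_fun_mul contDiffAt_fun_id hd]
  rcases n with _ | n
  · simp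
  · rw [Finset.sum_eq_single 1]
    · simp [iteratedDeriv_succ', add_mul]
    · intro i _ hi
      simp [iteratedDeriv_fun_id_zero, hi]
    · simp

theorem inverse_coeffs_norm_le {a₂ a₃ a₄ : ℂ} (h₃ : 4 * ‖a₃‖ ≤ 1 - 4 * ‖a₂‖ ^ 2)
    (h₄ : 6 * ‖a₄‖ ≤ 1) :
    ‖-a₂‖ ≤ 1 / 2 ∧ ‖2 * a₂ ^ 2 - a₃‖ ≤ 1 / 2 ∧
      ‖-(5 * a₂ ^ 3 - 5 * a₂ * a₃ + a₄)‖ ≤ 19 / 24 := by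
  have hx := norm_nonneg a₂
  have hy := norm_nonneg a₃
  have ha₂ : ‖a₂‖ ≤ 1 / 2 := by nlinarith
  have hb₃ : ‖2 * a₂ ^ 2 - a₃‖ ≤ 2 * ‖a₂‖ ^ 2 + ‖a₃‖ :=
    (norm_sub_le _ _).trans_eq (by simp)
  have hb₄ : ‖5 * a₂ ^ 3 - 5 * a₂ * a₃ + a₄‖ ≤
      5 * ‖a₂‖ ^ 3 + 5 * ‖a₂‖ * ‖a₃‖ + ‖a₄‖ :=
    (norm_add_le_of_le (norm_sub_le _ _) le_rfl).trans_eq (by simp)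
  refine ⟨by simpa using ha₂, by nlinarith, ?_⟩
  rw [norm_neg]
  nlinarith [mul_le_mul_of_nonneg_left h₃ hx]

theorem stmt_15_general (f : ℂ → ℂ) (hf : AnalyticOnNhd ℂ f (ball 0 1))
    (hf0 : f 0 = 0)
    (hΩ : ∀ z ∈ ball (0 : ℂ) 1, ‖z * deriv f z - f z‖ < 1 / 2)
    (a₂ a₃ a₄ : ℂ)
    (ha₂ : a₂ = iteratedDeriv 2 f 0 / 2)
    (ha₃ : a₃ = iteratedDeriv 3 f 0 / 6)
    (ha₄ : a₄ = iteratedDeriv 4 f 0 / 24) :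
    ‖-a₂‖ ≤ 1 / 2 ∧ ‖2 * a₂ ^ 2 - a₃‖ ≤ 1 / 2 ∧
      ‖-(5 * a₂ ^ 3 - 5 * a₂ * a₃ + a₄)‖ ≤ 19 / 24 := by
  set g : ℂ → ℂ := fun z => z * deriv f z - f z
  have hgd : DifferentiableOn ℂ g (ball 0 1) :=
    (differentiableOn_id.mul hf.deriv.differentiableOn).sub hf.differentiableOn
  have hgb : MapsTo g (ball 0 1) (closedBall 0 (1 / 2)) := fun z hz => by
    simpa using (hΩ z hz).le
  have hcoeff (n : ℕ) : iteratedDeriv n g 0 = (n - 1) * iteratedDeriv n f 0 :=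
    iteratedDeriv_mul_deriv_sub_zero (hf 0 (mem_ball_self one_pos)) n
  have h₃ := mul_norm_iteratedDeriv_three_le (by norm_num) hgd (by simp [g, hf0])
    (by simpa using hcoeff 1) hgb
  have h₄ := norm_iteratedDeriv_le_of_mapsTo_ball one_pos hgd hgb 4
  have e₂ : iteratedDeriv 2 g 0 / 2 = a₂ := by rw [hcoeff, ha₂]; norm_num
  have e₃ : iteratedDeriv 3 g 0 / 6 = 2 * a₃ := by rw [hcoeff, ha₃]; push_cast; ring
  have e₄ : iteratedDeriv 4 g 0 = 72 * a₄ := by rw [hcoeff, ha₄]; push_cast; ring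
  rw [e₂, e₃] at h₃
  rw [e₄] at h₄
  apply inverse_coeffs_norm_le
  · norm_num at h₃
    linarith
  · norm_num [Nat.factorial] at h₄
    linarith

theorem stmt_15 (f : ℂ → ℂ) (hf : AnalyticOnNhd ℂ f (ball 0 1))
    (hf0 : f 0 = 0) (hf1 : deriv f 0 = 1)
    (hΩ : ∀ z ∈ ball (0 : ℂ) 1, ‖z * deriv f z - f z‖ < 1 / 2)
    (a₂ a₃ a₄ : ℂ)
    (ha₂ : a₂ = iteratedDeriv 2 f 0 / 2)
    (ha₃ : a₃ = iteratedDeriv 3 f 0 / 6)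
    (ha₄ : a₄ = iteratedDeriv 4 f 0 / 24) :
    ‖-a₂‖ ≤ 1 / 2 ∧ ‖2 * a₂ ^ 2 - a₃‖ ≤ 1 / 2 ∧
      ‖-(5 * a₂ ^ 3 - 5 * a₂ * a₃ + a₄)‖ ≤ 19 / 24 :=
  stmt_15_general f hf hf0 hΩ a₂ a₃ a₄ ha₂ ha₃ ha₄
end

section
/- Let f(z) = z + Σ_{n≥2} a_n z^n belong to Ω. Then for every n ≥ 2, |T₂(n)| = |a_n² - a_{n+1}²| ≤ 1/(4(n-1)²) + 1/(4n²). -/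
/-!
For `g z = z f'(z) - f(z)` one has `g⁽ⁿ⁺¹⁾(0) = n f⁽ⁿ⁺¹⁾(0)` (Leibniz), so the Taylor
coefficients of `g` are `(n - 1) aₙ`. As `‖g‖ < 1/2` on the unit disc, Cauchy's estimate gives
`(n - 1) ‖aₙ‖ ≤ 1/2`, and the triangle inequality
`‖aₙ² - aₙ₊₁²‖ ≤ ‖aₙ‖² + ‖aₙ₊₁‖²` finishes the proof.
-/

open Metric Filter Topology

theorem Complex.norm_iteratedDeriv_le_of_forall_mem_ball_norm_le {F : Type*}
    [NormedAddCommGroup F] [NormedSpace ℂ F] [CompleteSpace F] {c : ℂ} {R C : ℝ} {f : ℂ → F}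
    (n : ℕ) (hR : 0 < R) (hf : DifferentiableOn ℂ f (ball c R))
    (hC : ∀ z ∈ ball c R, ‖f z‖ ≤ C) :
    ‖iteratedDeriv n f c‖ ≤ n.factorial * C / R ^ n := by
  have hlim : Tendsto (fun r : ℝ => n.factorial * C / r ^ n) (𝓝[<] R)
      (𝓝 (n.factorial * C / R ^ n)) :=
    (continuousAt_const.div (continuousAt_id.pow n) (pow_ne_zero n hR.ne')).tendsto.mono_left
      nhdsWithin_le_nhds
  refine ge_of_tendsto hlim ?_
  filter_upwards [Ioo_mem_nhdsLT hR] with r ⟨hr0, hrR⟩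
  have hsub : closedBall c r ⊆ ball c R := closedBall_subset_ball hrR
  exact norm_iteratedDeriv_le_of_forall_mem_sphere_norm_le n hr0
    (hf.diffContOnCl_ball hsub) fun z hz => hC z (hsub (sphere_subset_closedBall hz))

theorem iteratedDeriv_succ_mul_deriv_sub_self {𝕜 : Type*} [NontriviallyNormedField 𝕜]
    [CompleteSpace 𝕜] {f : 𝕜 → 𝕜} {x : 𝕜} (hf : AnalyticAt 𝕜 f x) (n : ℕ) :
    iteratedDeriv (n + 1) (fun z => z * deriv f z - f z) x =
      x * iteratedDeriv (n + 2) f x + n * iteratedDeriv (n + 1) f x := by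
  have hmul : iteratedDeriv (n + 1) (fun z => z * deriv f z) x =
      x * iteratedDeriv (n + 2) f x + (n + 1) * iteratedDeriv (n + 1) f x := by
    rw [← iteratedDerivWithin_univ, show (fun z => z * deriv f z) = id * deriv f from rfl,
      iteratedDerivWithin_mul (Set.mem_univ x) uniqueDiffOn_univ
        contDiffAt_id.contDiffWithinAt hf.deriv.contDiffAt.contDiffWithinAt,
      Finset.sum_range_succ', Finset.sum_range_succ']
    simp only [Set.mem_univ, uniqueDiffOn_univ, iteratedDerivWithin_id, Nat.add_eq_zero_iff,
      one_ne_zero, and_false, and_self, ↓reduceIte, Nat.add_eq_right, mul_zero, Nat.reduceSubDiff,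
      iteratedDerivWithin_univ, ← iteratedDeriv_succ', zero_mul, Finset.sum_const_zero, zero_add,
      Nat.choose_one_right, Nat.cast_add, Nat.cast_one, mul_one, add_tsub_cancel_right,
      Nat.choose_zero_right, one_mul, tsub_zero]
    ring
  rw [iteratedDeriv_fun_sub (f := fun z => z * deriv f z)
    (contDiffAt_id.mul hf.deriv.contDiffAt) hf.contDiffAt, hmul]
  ring

theorem mul_norm_taylorCoeff_le_of_norm_mul_deriv_sub_lt {f : ℂ → ℂ}
    (hf : AnalyticOnNhd ℂ f (ball 0 1))
    (hΩ : ∀ z ∈ ball (0 : ℂ) 1, ‖z * deriv f z - f z‖ < 1 / 2) (n : ℕ) :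
    n * ‖iteratedDeriv (n + 1) f 0 / ((n + 1).factorial : ℂ)‖ ≤ 1 / 2 := by
  have hg : DifferentiableOn ℂ (fun z => z * deriv f z - f z) (ball 0 1) :=
    (differentiableOn_id.mul hf.deriv.differentiableOn).sub hf.differentiableOn
  have hcauchy := Complex.norm_iteratedDeriv_le_of_forall_mem_ball_norm_le (n + 1) one_pos hg
    fun z hz => (hΩ z hz).le
  rw [iteratedDeriv_succ_mul_deriv_sub_self (hf 0 (mem_ball_self one_pos)), zero_mul, zero_add,
    norm_mul, Complex.norm_natCast, one_pow, div_one] at hcauchy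
  rw [norm_div, Complex.norm_natCast, mul_div_assoc', div_le_iff₀ (by positivity)]
  linarith

theorem stmt_16_general (f : ℂ → ℂ) (hf : AnalyticOnNhd ℂ f (ball 0 1))
    (hΩ : ∀ z ∈ ball (0 : ℂ) 1, ‖z * deriv f z - f z‖ < 1 / 2) :
    ∀ n : ℕ, 2 ≤ n →
      ‖(iteratedDeriv n f 0 / ((Nat.factorial n : ℕ) : ℂ)) ^ 2 -
        (iteratedDeriv (n + 1) f 0 / ((Nat.factorial (n + 1) : ℕ) : ℂ)) ^ 2‖ ≤
        1 / (4 * ((n : ℝ) - 1) ^ 2) + 1 / (4 * (n : ℝ) ^ 2) := by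
  intro n hn
  obtain ⟨k, rfl⟩ : ∃ k, n = k + 1 := ⟨n - 1, by omega⟩
  have hk : (0 : ℝ) < k := by exact_mod_cast (by omega : 0 < k)
  set a := iteratedDeriv (k + 1) f 0 / ((k + 1).factorial : ℂ)
  set b := iteratedDeriv (k + 1 + 1) f 0 / ((k + 1 + 1).factorial : ℂ)
  have ha : ‖a‖ ≤ 1 / (2 * k) := by
    rw [le_div_iff₀ (by positivity)]
    linarith [mul_norm_taylorCoeff_le_of_norm_mul_deriv_sub_lt hf hΩ k]
  have hb : ‖b‖ ≤ 1 / (2 * (k + 1)) := by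
    rw [le_div_iff₀ (by positivity)]
    have := mul_norm_taylorCoeff_le_of_norm_mul_deriv_sub_lt hf hΩ (k + 1)
    push_cast at this
    linarith
  calc ‖a ^ 2 - b ^ 2‖ ≤ ‖a‖ ^ 2 + ‖b‖ ^ 2 := by
        rw [← norm_pow, ← norm_pow]
        exact norm_sub_le _ _
    _ ≤ (1 / (2 * k)) ^ 2 + (1 / (2 * (k + 1))) ^ 2 := by gcongr
    _ = 1 / (4 * (((k + 1 : ℕ) : ℝ) - 1) ^ 2) + 1 / (4 * ((k + 1 : ℕ) : ℝ) ^ 2) := by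
        rw [Nat.cast_add_one, add_sub_cancel_right]
        field_simp
        ring

theorem stmt_16 (f : ℂ → ℂ) (hf : AnalyticOnNhd ℂ f (ball 0 1))
    (hf0 : f 0 = 0) (hf1 : deriv f 0 = 1)
    (hΩ : ∀ z ∈ ball (0 : ℂ) 1, ‖z * deriv f z - f z‖ < 1 / 2) :
    ∀ n : ℕ, 2 ≤ n →
      ‖(iteratedDeriv n f 0 / ((Nat.factorial n : ℕ) : ℂ)) ^ 2 -
        (iteratedDeriv (n + 1) f 0 / ((Nat.factorial (n + 1) : ℕ) : ℂ)) ^ 2‖ ≤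
        1 / (4 * ((n : ℝ) - 1) ^ 2) + 1 / (4 * (n : ℝ) ^ 2) :=
  stmt_16_general f hf hΩ
end
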